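/- arXiv:1311.7171 — 6 statements merged into one kernel-verified Lean document; each statement's English description precedes it below -/
import Mathlib

section
/- Define S_m(a,b) recursively for positive integers b < a by: if b ∣ a then S_m(a,b) = a/b; otherwise write a = b·q + ε·r with 0 < 2r ≤ b, ε = ±1, choosing ε = +1 when 2r = b, and set S_m(a,b) = q + 1 + S_m(b,r). Then for all positive integers a, b with 2b < a, one has S_m(a,b) + 1 = S_m(a, a − b). -/
/-- `Sm a b` is the step count of the method of least absolute remainders on `(a, b)`:
if `b ∣ a` then `Sm a b = a / b`; otherwise write `a = b * q + ε * r` with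
`0 < 2 * r ≤ b`, `ε = ±1` (choosing `ε = +1` when `2 * r = b`), and set
`Sm a b = q + 1 + Sm b r`. -/
def Sm (a b : ℕ) : ℕ :=
  if hb : b = 0 then 0
  else if hd : b ∣ a then a / b
  else if 2 * (a % b) ≤ b then
    a / b + 1 + Sm b (a % b)
  else
    (a / b + 1) + 1 + Sm b (b - a % b)
termination_by b
decreasing_by
  · exact Nat.mod_lt a (Nat.pos_of_ne_zero hb)
  · exact Nat.sub_lt (Nat.pos_of_ne_zero hb)
      (Nat.pos_of_ne_zero fun h => hd (Nat.dvd_of_mod_eq_zero h))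

/-!
Adding `b` to the first argument adds one step (`Sm (a + b) b = Sm a b + 1`), so with
`c = a - b > b` the claim is equivalent to the swap identity `Sm b c = Sm c b + 1` for `0 < b < c`.
The swap identity holds by one unfolding when `2 * b ≤ c`; otherwise the remainder is taken negative,
`Sm b c = Sm c (c - b) + 2`, and the claim for the smaller first argument `c` closes the induction.
-/

theorem Sm_add_self (a : ℕ) {b : ℕ} (hb : 0 < b) : Sm (a + b) b = Sm a b + 1 := by
  conv_lhs => rw [Sm]
  conv_rhs => rw [Sm]
  simp only [hb.ne', dite_false, Nat.add_mod_right, Nat.add_div_right a hb, Nat.dvd_add_self_right]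
  by_cases hd : b ∣ a
  · simp [hd]
  · simp only [hd, dite_false]
    split <;> ring

theorem Sm_of_two_mul_le {r b : ℕ} (hr : 0 < r) (h : 2 * r ≤ b) : Sm r b = Sm b r + 1 := by
  have hrb : r < b := by omega
  rw [Sm, dif_neg (by omega), dif_neg (Nat.not_dvd_of_pos_of_lt hr hrb),
    Nat.mod_eq_of_lt hrb, Nat.div_eq_of_lt hrb, if_pos h]
  ring

theorem Sm_of_lt_two_mul {r b : ℕ} (hrb : r < b) (h : b < 2 * r) :
    Sm r b = Sm b (b - r) + 2 := by
  rw [Sm, dif_neg (by omega), dif_neg (Nat.not_dvd_of_pos_of_lt (by omega) hrb),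
    Nat.mod_eq_of_lt hrb, Nat.div_eq_of_lt hrb, if_neg (by omega)]
  ring

theorem Sm_add_add_one_of_swap {b c : ℕ} (hb : 0 < b) (hc : 0 < c)
    (h : Sm b c = Sm c b + 1) : Sm (b + c) b + 1 = Sm (b + c) c := by
  rw [Sm_add_self b hc, add_comm b c, Sm_add_self c hb, h]

theorem Sm_swap {r b : ℕ} (hr : 0 < r) (hrb : r < b) : Sm r b = Sm b r + 1 := by
  induction b using Nat.strong_induction_on generalizing r with
  | _ b ih =>
  rcases le_or_gt (2 * r) b with h | h
  · exact Sm_of_two_mul_le hr h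
  · have hsub := Sm_add_add_one_of_swap (by omega) hr (ih r hrb (r := b - r) (by omega) (by omega))
    rw [Nat.sub_add_cancel hrb.le] at hsub
    rw [Sm_of_lt_two_mul hrb h, ← hsub]

/-- For all positive integers `a`, `b` with `2 * b < a`,
`Sm a b + 1 = Sm a (a - b)`. -/
theorem sm_sub (a b : ℕ) (hb : 0 < b) (hab : 2 * b < a) :
    Sm a b + 1 = Sm a (a - b) := by
  have h := Sm_add_add_one_of_swap hb (by omega) (Sm_swap (r := b) (b := a - b) hb (by omega))
  rwa [Nat.add_sub_cancel' (by omega)] at h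
end

section
/- Let a > b be positive integers. The step count of the regular Euclidean algorithm on (a,b) equals the step count of the method of least absolute remainders on (a,b). That is, if the regular algorithm produces n divisions with quotients q₁,…,q_n and the least-absolute-remainder method produces m divisions with quotients p₁,…,p_m, then (n−1) + Σ q_j = (m−1) + Σ p_j. -/
/-- A generalized Euclidean algorithm on the pair `(a, b)`:
a sequence of equations `x (i-1) = x i * p i + ε (i+1) * x (i+1)` for `i = 1, …, m`,
with positive quotients `p i`, signs `ε i = ±1`, strictly decreasing positive
remainders, and final remainder `x (m+1) = 0`. -/
structure GenEuclid (a b : ℕ) where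
  m : ℕ
  x : ℕ → ℕ
  p : ℕ → ℕ
  ε : ℕ → ℤ
  hm : 1 ≤ m
  hx0 : x 0 = a
  hx1 : x 1 = b
  hxm1 : x (m + 1) = 0
  hpos : ∀ i, i ≤ m → 0 < x i
  hdec : ∀ i, 1 ≤ i → i ≤ m → x (i + 1) < x i
  hp : ∀ i, 1 ≤ i → i ≤ m → 1 ≤ p i
  hε : ∀ i, 2 ≤ i → i ≤ m → ε i = 1 ∨ ε i = -1
  heq : ∀ i, 1 ≤ i → i ≤ m → (x (i - 1) : ℤ) = x i * p i + ε (i + 1) * x (i + 1)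

/-- The step count of a generalized Euclidean algorithm:
the sum of all quotients (total subtractions) plus the number of divisions minus one
(the swaps). -/
def GenEuclid.steps {a b : ℕ} (E : GenEuclid a b) : ℕ :=
  (E.m - 1) + ∑ i ∈ Finset.Icc 1 E.m, E.p i

/-- The regular Euclidean algorithm: all remainders are taken with sign `+1`. -/
def GenEuclid.IsRegular {a b : ℕ} (E : GenEuclid a b) : Prop :=
  ∀ i, 2 ≤ i → i ≤ E.m → E.ε i = 1

/-- The method of least absolute remainders: at each division the remainder of least
absolute value is chosen, i.e. `2 * x (i+1) ≤ x i`, with ties (remainder exactly half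
the divisor) broken in favor of the positive remainder. -/
def GenEuclid.IsLAR {a b : ℕ} (E : GenEuclid a b) : Prop :=
  ∀ i, 1 ≤ i → i ≤ E.m →
    2 * E.x (i + 1) ≤ E.x i ∧ (2 * E.x (i + 1) = E.x i → E.ε (i + 1) = 1)

/-- The method of least absolute remainders (no tie-breaking condition):
at every step `2 * x (i+1) ≤ x i`. -/
def GenEuclid.IsLAR' {a b : ℕ} (E : GenEuclid a b) : Prop :=
  ∀ i, 1 ≤ i → i ≤ E.m → 2 * E.x (i + 1) ≤ E.x i

/-!
Both methods have the same cost as the regular algorithm because a division with negative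
remainder, `a = b p - c` with `2 c < b`, costs exactly as much as the two regular divisions
`a = b (p - 1) + (b - c)` and `b = (b - c) · 1 + c` it replaces: the extra swap is paid for by
the one subtraction saved on the next pair, `(b, c)` instead of `(b - c, c)`. So for every
method whose negative remainders are less than half the divisor, the step count is a function
of `(a, b)` alone, namely that of the regular algorithm.
-/

/-- One more than the step count of the regular Euclidean algorithm on `(a, b)`: every division
is charged its quotient plus one swap. -/
def euclidSteps (a b : ℕ) : ℕ :=
  if h : b = 0 then 0 else a / b + 1 + euclidSteps b (a % b)
termination_by b
decreasing_by exact Nat.mod_lt _ (Nat.pos_of_ne_zero h)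

@[simp]
lemma euclidSteps_zero_right (a : ℕ) : euclidSteps a 0 = 0 := by
  rw [euclidSteps, dif_pos rfl]

lemma euclidSteps_of_pos {a b : ℕ} (hb : 0 < b) :
    euclidSteps a b = a / b + 1 + euclidSteps b (a % b) := by
  rw [euclidSteps, dif_neg hb.ne']

lemma euclidSteps_mul_add {b c : ℕ} (p : ℕ) (hc : c < b) :
    euclidSteps (b * p + c) b = p + 1 + euclidSteps b c := by
  have hb : 0 < b := by omega
  rw [euclidSteps_of_pos hb, Nat.mul_add_div hb, Nat.mul_add_mod, Nat.div_eq_of_lt hc,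
    Nat.mod_eq_of_lt hc, add_zero]

lemma euclidSteps_add_self (r : ℕ) {s : ℕ} (hs : 0 < s) :
    euclidSteps (r + s) s = euclidSteps r s + 1 := by
  rw [euclidSteps_of_pos hs, euclidSteps_of_pos hs, Nat.add_div_right _ hs, Nat.add_mod_right]
  omega

lemma euclidSteps_of_add_eq_mul {a b c p : ℕ} (hc : 0 < c) (hcb : 2 * c < b)
    (h : a + c = b * p) : euclidSteps a b = p + 1 + euclidSteps b c := by
  obtain ⟨q, rfl⟩ : ∃ q, p = q + 1 := Nat.exists_eq_add_one.mpr (Nat.pos_of_ne_zero (by rintro rfl; omega))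
  have ha : a = b * q + (b - c) := by rw [Nat.mul_succ] at h; omega
  have hb : b = (b - c) * 1 + c := by omega
  have hfirst : euclidSteps a b = q + 1 + euclidSteps b (b - c) := by
    rw [ha, euclidSteps_mul_add q (by omega)]
  have hsecond : euclidSteps b (b - c) = 1 + 1 + euclidSteps (b - c) c := by
    have h := euclidSteps_mul_add (b := b - c) 1 (by omega : c < b - c)
    rwa [← hb] at h
  have hshift : euclidSteps b c = euclidSteps (b - c) c + 1 := by
    rw [← euclidSteps_add_self _ hc, Nat.sub_add_cancel (by omega)]
  omega

namespace GenEuclid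

variable {a b : ℕ} (E : GenEuclid a b)

def NegRemLtHalf : Prop :=
  ∀ i, 1 ≤ i → i ≤ E.m → E.ε (i + 1) = -1 → 2 * E.x (i + 1) < E.x i

variable {E}

lemma IsRegular.negRemLtHalf (hE : E.IsRegular) : E.NegRemLtHalf := by
  intro i hi1 him hneg
  rcases Nat.lt_or_ge i E.m with hlt | hge
  · rw [hE (i + 1) (by omega) hlt] at hneg
    norm_num at hneg
  · obtain rfl : i = E.m := by omega
    simpa [E.hxm1] using E.hpos _ le_rfl

lemma IsLAR.negRemLtHalf (hE : E.IsLAR) : E.NegRemLtHalf := by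
  intro i hi1 him hneg
  obtain ⟨hle, htie⟩ := hE i hi1 him
  refine lt_of_le_of_ne hle fun heq => ?_
  rw [htie heq] at hneg
  norm_num at hneg

lemma euclidSteps_eq_of_division (hE : E.NegRemLtHalf) {i : ℕ} (hi1 : 1 ≤ i) (him : i ≤ E.m) :
    euclidSteps (E.x (i - 1)) (E.x i) = E.p i + 1 + euclidSteps (E.x i) (E.x (i + 1)) := by
  have heq := E.heq i hi1 him
  have hdec := E.hdec i hi1 him
  rcases Nat.eq_zero_or_pos (E.x (i + 1)) with hzero | hpos
  · rw [hzero, Nat.cast_zero, mul_zero, add_zero] at heq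
    have heq' : E.x (i - 1) = E.x i * E.p i + 0 := by exact_mod_cast heq
    rw [hzero, heq', euclidSteps_mul_add _ (E.hpos i him)]
  -- the last remainder is zero, so a positive one comes with a sign
  have him' : i + 1 ≤ E.m := by
    by_contra h
    obtain rfl : i = E.m := by omega
    rw [E.hxm1] at hpos
    exact hpos.false
  rcases E.hε (i + 1) (by omega) him' with hsign | hsign
  · rw [hsign, one_mul] at heq
    have heq' : E.x (i - 1) = E.x i * E.p i + E.x (i + 1) := by exact_mod_cast heq
    rw [heq', euclidSteps_mul_add _ hdec]
  · rw [hsign, neg_one_mul] at heq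
    have heq' : (E.x (i - 1) : ℤ) + E.x (i + 1) = E.x i * E.p i := by linarith
    exact euclidSteps_of_add_eq_mul hpos (hE i hi1 him hsign) (by exact_mod_cast heq')

lemma euclidSteps_eq_sum_add (hE : E.NegRemLtHalf) {k : ℕ} (hk : k ≤ E.m) :
    euclidSteps a b = ∑ i ∈ Finset.Icc 1 k, (E.p i + 1) + euclidSteps (E.x k) (E.x (k + 1)) := by
  induction k with
  | zero => simp [E.hx0, E.hx1]
  | succ k ih =>
    have hstep := E.euclidSteps_eq_of_division hE (i := k + 1) (by omega) hk
    rw [Nat.add_sub_cancel] at hstep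
    rw [ih (by omega), hstep, Finset.sum_Icc_succ_top (by omega)]
    ring

lemma steps_add_one (hE : E.NegRemLtHalf) : E.steps + 1 = euclidSteps a b := by
  rw [E.euclidSteps_eq_sum_add hE le_rfl, E.hxm1, euclidSteps_zero_right, add_zero,
    Finset.sum_add_distrib, Finset.sum_const, Nat.card_Icc, steps, smul_eq_mul, mul_one]
  have := E.hm
  omega

end GenEuclid

theorem regular_steps_eq_lar_steps_general (a b : ℕ)
    (R L : GenEuclid a b) (hR : R.IsRegular) (hL : L.IsLAR) :
    (R.m - 1) + ∑ j ∈ Finset.Icc 1 R.m, R.p j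
      = (L.m - 1) + ∑ j ∈ Finset.Icc 1 L.m, L.p j := by
  show R.steps = L.steps
  have hR' := R.steps_add_one hR.negRemLtHalf
  have hL' := L.steps_add_one hL.negRemLtHalf
  omega

/-- For positive integers `a > b`, the step count of the regular Euclidean algorithm
on `(a, b)` equals the step count of the method of least absolute remainders. -/
theorem regular_steps_eq_lar_steps (a b : ℕ) (hb : 0 < b) (hba : b < a)
    (R L : GenEuclid a b) (hR : R.IsRegular) (hL : L.IsLAR) :
    (R.m - 1) + ∑ j ∈ Finset.Icc 1 R.m, R.p j
      = (L.m - 1) + ∑ j ∈ Finset.Icc 1 L.m, L.p j :=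
  regular_steps_eq_lar_steps_general a b R L hR hL
end

section
/- Let a > b be positive integers. Then the step count S_m(a,b) of the method of least absolute remainders is less than or equal to the step count S(a,b) of any generalized Euclidean algorithm applied to (a,b). -/
/-!
Let `larSteps a b` be the step count of the method of least absolute remainders, computed
recursively. The first division of any generalized Euclidean algorithm costs `p + 1` steps and
leaves the pair `(b, c)` with `a = b p + c` or `a + c = b p`; in either case
`larSteps a b ≤ p + 1 + larSteps b c`, so by induction `larSteps` bounds the step count of every
algorithm from below, while the method of least absolute remainders attains it. The one real
input is that taking the larger of the two remainders costs at least one more step: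
`larSteps b c < larSteps b (b - c)` whenever `2 c < b`.
-/

open Finset

theorem Finset.sum_Icc_one_succ {M : Type*} [AddCommMonoid M] (f : ℕ → M) (n : ℕ) :
    ∑ i ∈ Icc 1 (n + 1), f i = f 1 + ∑ i ∈ Icc 1 n, f (i + 1) := by
  induction n with
  | zero => simp
  | succ n ih => rw [sum_Icc_succ_top (by omega), ih, sum_Icc_succ_top (by omega), add_assoc]

/-- With `q = a / b` and `r = a % b`, the division `a = b q + r` is used when `2 r ≤ b`, and
`a = b (q + 1) - (b - r)` otherwise. -/
def larSteps (a b : ℕ) : ℕ :=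
  if hb : b = 0 then 0
  else if 2 * (a % b) ≤ b then
    a / b + (if a % b = 0 then 0 else 1 + larSteps b (a % b))
  else
    (a / b + 1) + (1 + larSteps b (b - a % b))
termination_by b
decreasing_by
  · exact Nat.mod_lt _ (Nat.pos_of_ne_zero hb)
  · exact Nat.sub_lt (Nat.pos_of_ne_zero hb) (by omega)

section larSteps

variable {a b c q : ℕ}

theorem larSteps_mul_add (hcb : c < b) :
    larSteps (b * q + c) b = if 2 * c ≤ b then
      q + (if c = 0 then 0 else 1 + larSteps b c)
    else
      (q + 1) + (1 + larSteps b (b - c)) := by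
  have hb : b ≠ 0 := by omega
  have hmod : (b * q + c) % b = c := by rw [Nat.mul_add_mod, Nat.mod_eq_of_lt hcb]
  have hdiv : (b * q + c) / b = q := by
    rw [Nat.mul_add_div (by omega), Nat.div_eq_of_lt hcb, add_zero]
  rw [larSteps, dif_neg hb, hmod, hdiv]

theorem larSteps_mul (hb : 0 < b) : larSteps (b * q) b = q := by
  simpa using larSteps_mul_add (q := q) hb

theorem larSteps_mul_add_of_two_mul_le (hc : 0 < c) (h2c : 2 * c ≤ b) :
    larSteps (b * q + c) b = q + 1 + larSteps b c := by
  rw [larSteps_mul_add (by omega), if_pos h2c, if_neg hc.ne']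
  ring

theorem larSteps_mul_add_of_lt_two_mul (hcb : c < b) (h2c : b < 2 * c) :
    larSteps (b * q + c) b = q + 2 + larSteps b (b - c) := by
  rw [larSteps_mul_add hcb, if_neg (by omega)]
  ring

theorem larSteps_add_self (hb : 0 < b) : larSteps (a + b) b = larSteps a b + 1 := by
  have hr : a % b < b := Nat.mod_lt a hb
  have ha : b * (a / b) + a % b = a := Nat.div_add_mod a b
  have hab : a + b = b * (a / b + 1) + a % b := by rw [mul_add_one]; omega
  rw [hab, larSteps_mul_add hr]
  conv_rhs => rw [← ha, larSteps_mul_add hr]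
  split_ifs <;> omega

theorem larSteps_lt_larSteps_sub (hc : 0 < c) (h2c : 2 * c < b) :
    larSteps b c < larSteps b (b - c) := by
  induction b using Nat.strong_induction_on generalizing c with
  | _ b ih =>
  have hrhs : larSteps b (b - c) = if 2 * c ≤ b - c then
      1 + (if c = 0 then 0 else 1 + larSteps (b - c) c)
    else
      (1 + 1) + (1 + larSteps (b - c) (b - c - c)) := by
    have h := larSteps_mul_add (b := b - c) (q := 1) (c := c) (by omega)
    rwa [mul_one, Nat.sub_add_cancel (by omega)] at h
  rw [hrhs]
  by_cases h3c : 3 * c ≤ b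
  · have hshift : larSteps b c = larSteps (b - c) c + 1 := by
      rw [← larSteps_add_self hc, Nat.sub_add_cancel (by omega)]
    rw [if_pos (by omega), if_neg hc.ne', hshift]
    omega
  · obtain ⟨d, rfl⟩ : ∃ d, b = c * 2 + d := ⟨b - 2 * c, by omega⟩
    have hd : 0 < d := by omega
    rw [if_neg (by omega), show c * 2 + d - c - c = d by omega,
      show c * 2 + d - c = c + d by omega, larSteps_add_self hd,
      larSteps_mul_add (by omega)]
    by_cases h2d : 2 * d ≤ c
    · rw [if_pos h2d, if_neg hd.ne']
      omega
    · have hlt := ih c (by omega) (c := c - d) (by omega) (by omega)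
      rw [Nat.sub_sub_self (by omega)] at hlt
      rw [if_neg h2d]
      omega

theorem larSteps_mul_add_le (hc : 0 < c) (hcb : c < b) :
    larSteps (b * q + c) b ≤ q + 1 + larSteps b c := by
  rcases le_or_gt (2 * c) b with h2c | h2c
  · exact (larSteps_mul_add_of_two_mul_le hc h2c).le
  · have hlt := larSteps_lt_larSteps_sub (b := b) (c := b - c) (by omega) (by omega)
    rw [Nat.sub_sub_self hcb.le] at hlt
    rw [larSteps_mul_add_of_lt_two_mul hcb h2c]
    omega

theorem exists_eq_mul_add_sub_of_add_eq_mul (hc : 0 < c) (hcb : c ≤ b) (h : a + c = b * q) :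
    ∃ q', q = q' + 1 ∧ a = b * q' + (b - c) := by
  obtain ⟨q', rfl⟩ : ∃ q', q = q' + 1 :=
    Nat.exists_eq_add_one.mpr (Nat.pos_of_ne_zero (by rintro rfl; omega))
  exact ⟨q', rfl, by rw [mul_add_one] at h; omega⟩

theorem larSteps_of_add_eq_mul (hc : 0 < c) (h2c : 2 * c < b) (h : a + c = b * q) :
    larSteps a b = q + 1 + larSteps b c := by
  obtain ⟨q, rfl, ha⟩ := exists_eq_mul_add_sub_of_add_eq_mul hc (by omega) h
  rw [ha, larSteps_mul_add_of_lt_two_mul (by omega) (by omega), Nat.sub_sub_self (by omega)]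

theorem larSteps_le_of_add_eq_mul (hc : 0 < c) (hcb : c < b) (h : a + c = b * q) :
    larSteps a b ≤ q + 1 + larSteps b c := by
  rcases lt_or_ge (2 * c) b with h2c | h2c
  · exact (larSteps_of_add_eq_mul hc h2c h).le
  · obtain ⟨q, rfl, ha⟩ := exists_eq_mul_add_sub_of_add_eq_mul hc hcb.le h
    have hle := larSteps_mul_add_le (q := q) (b := b) (c := b - c) (by omega) (by omega)
    rw [← ha] at hle
    rcases h2c.eq_or_lt with h2c | h2c
    · rw [show b - c = c by omega] at hle
      omega
    · have hlt := larSteps_lt_larSteps_sub (b := b) (c := b - c) (by omega) (by omega)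
      rw [Nat.sub_sub_self hcb.le] at hlt
      omega

end larSteps

namespace GenEuclid

variable {a b : ℕ}

theorem b_pos (E : GenEuclid a b) : 0 < b := E.hx1 ▸ E.hpos 1 E.hm

theorem x_two_lt (E : GenEuclid a b) : E.x 2 < b := by
  simpa [E.hx1] using E.hdec 1 le_rfl E.hm

theorem first_division (E : GenEuclid a b) : (a : ℤ) = b * E.p 1 + E.ε 2 * E.x 2 := by
  simpa [E.hx0, E.hx1] using E.heq 1 le_rfl E.hm

theorem eq_mul_of_m_eq_one (E : GenEuclid a b) (h1 : E.m = 1) : a = b * E.p 1 := by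
  have hx2 : E.x 2 = 0 := by simpa [h1] using E.hxm1
  have h := E.first_division
  rw [hx2] at h
  have h' : (a : ℤ) = b * E.p 1 := by simpa using h
  exact_mod_cast h'

theorem first_division_cases (E : GenEuclid a b) (h2 : 2 ≤ E.m) :
    (E.ε 2 = 1 ∧ a = b * E.p 1 + E.x 2) ∨ (E.ε 2 = -1 ∧ a + E.x 2 = b * E.p 1) := by
  have h := E.first_division
  rcases E.hε 2 le_rfl h2 with hε | hε <;> rw [hε] at h
  · exact .inl ⟨hε, by omega⟩
  · exact .inr ⟨hε, by omega⟩


def tail (E : GenEuclid a b) (h2 : 2 ≤ E.m) : GenEuclid b (E.x 2) where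
  m := E.m - 1
  x i := E.x (i + 1)
  p i := E.p (i + 1)
  ε i := E.ε (i + 1)
  hm := by omega
  hx0 := E.hx1
  hx1 := rfl
  hxm1 := by rw [Nat.sub_add_cancel E.hm]; exact E.hxm1
  hpos i hi := E.hpos (i + 1) (by omega)
  hdec i h1 hi := E.hdec (i + 1) (by omega) (by omega)
  hp i h1 hi := E.hp (i + 1) (by omega) (by omega)
  hε i h1 hi := E.hε (i + 1) (by omega) (by omega)
  heq i h1 hi := by
    have h := E.heq (i + 1) (by omega) (by omega)
    rw [Nat.add_sub_cancel] at h
    show (E.x (i - 1 + 1) : ℤ) = _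
    rwa [Nat.sub_add_cancel h1]

theorem steps_eq_tail_steps (E : GenEuclid a b) (h2 : 2 ≤ E.m) :
    E.steps = E.p 1 + 1 + (E.tail h2).steps := by
  obtain ⟨n, hn⟩ : ∃ n, E.m = n + 1 := ⟨E.m - 1, by omega⟩
  simp only [steps, tail, hn, sum_Icc_one_succ, Nat.add_sub_cancel]
  omega

theorem IsLAR.tail {E : GenEuclid a b} (hL : E.IsLAR) (h2 : 2 ≤ E.m) : (E.tail h2).IsLAR :=
  fun i h1 hi => hL (i + 1) (by omega) (by simp only [GenEuclid.tail] at hi; omega)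

theorem steps_eq_larSteps_of_m_eq_one (E : GenEuclid a b) (h1 : E.m = 1) :
    E.steps = larSteps a b := by
  have h := larSteps_mul (q := E.p 1) E.b_pos
  rw [← E.eq_mul_of_m_eq_one h1] at h
  simp [steps, h1, h]

end GenEuclid

theorem larSteps_le_steps {a b : ℕ} (E : GenEuclid a b) : larSteps a b ≤ E.steps := by
  induction b using Nat.strong_induction_on generalizing a with
  | _ b ih =>
  by_cases h2 : 2 ≤ E.m
  · have hc := E.hpos 2 h2
    have hcb := E.x_two_lt
    have hfirst : larSteps a b ≤ E.p 1 + 1 + larSteps b (E.x 2) := by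
      rcases E.first_division_cases h2 with ⟨-, h⟩ | ⟨-, h⟩
      · exact (congrArg (larSteps · b) h).trans_le (larSteps_mul_add_le hc hcb)
      · exact larSteps_le_of_add_eq_mul hc hcb h
    have htail := ih (E.x 2) hcb (E.tail h2)
    rw [E.steps_eq_tail_steps h2]
    omega
  · exact (E.steps_eq_larSteps_of_m_eq_one (by have := E.hm; omega)).ge

theorem GenEuclid.IsLAR.steps_eq_larSteps {a b : ℕ} {L : GenEuclid a b} (hL : L.IsLAR) :
    L.steps = larSteps a b := by
  induction b using Nat.strong_induction_on generalizing a with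
  | _ b ih =>
  by_cases h2 : 2 ≤ L.m
  · have hc := L.hpos 2 h2
    have hlar := L.hx1 ▸ hL 1 le_rfl L.hm
    have hfirst : larSteps a b = L.p 1 + 1 + larSteps b (L.x 2) := by
      rcases L.first_division_cases h2 with ⟨-, h⟩ | ⟨hε, h⟩
      · exact (congrArg (larSteps · b) h).trans (larSteps_mul_add_of_two_mul_le hc hlar.1)
      · have h2c : 2 * L.x 2 < b := lt_of_le_of_ne hlar.1 fun htie => by
          simp [hlar.2 htie] at hε
        exact larSteps_of_add_eq_mul hc h2c h
    rw [L.steps_eq_tail_steps h2, ih (L.x 2) L.x_two_lt (hL.tail h2), hfirst]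
  · exact L.steps_eq_larSteps_of_m_eq_one (by have := L.hm; omega)

theorem lar_steps_min_general (a b : ℕ)
    (L E : GenEuclid a b) (hL : L.IsLAR) :
    L.steps ≤ E.steps :=
  hL.steps_eq_larSteps ▸ larSteps_le_steps E

/-- For positive integers `a > b`, the step count of the method of least absolute
remainders on `(a, b)` is at most the step count of any generalized Euclidean
algorithm on `(a, b)`. -/
theorem lar_steps_min (a b : ℕ) (hb : 0 < b) (hba : b < a)
    (L E : GenEuclid a b) (hL : L.IsLAR) :
    L.steps ≤ E.steps :=
  lar_steps_min_general a b L E hL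
end

section
/- Let a > b be positive integers, let m be the number of divisions performed by the method of least absolute remainders on (a,b), and let m' be the number of divisions performed by any generalized Euclidean algorithm on (a,b). Then m ≤ m' (Kronecker's theorem). -/
theorem eq_mod_or_mod_add_eq {a b c p : ℕ} (hcb : c < b) (h : a = b * p + c ∨ a + c = b * p) :
    c = a % b ∨ a % b + c = b := by
  rcases h with rfl | h
  · left
    rw [Nat.mul_add_mod, Nat.mod_eq_of_lt hcb]
  · rcases Nat.eq_zero_or_pos c with rfl | hc
    · left
      rw [add_zero] at h
      rw [h, Nat.mul_mod_right]
    · right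
      have hsum : a % b + c + b * (a / b) = b * p := by
        have := Nat.mod_add_div a b
        omega
      have hdvd : b ∣ a % b + c :=
        (Nat.dvd_add_left (dvd_mul_right b _)).mp (hsum ▸ dvd_mul_right b p)
      have hmod := Nat.mod_lt a (hc.trans hcb)
      exact Nat.eq_of_dvd_of_lt_two_mul (by omega) hdvd (by omega)

/-- `EuclidChain R a b n`: a generalized Euclidean algorithm on `(a, b)` with `n` divisions in
which every nonzero remainder `c` of a division by `b` satisfies `R b c`. -/
inductive EuclidChain (R : ℕ → ℕ → Prop) : ℕ → ℕ → ℕ → Prop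
  | last {a b : ℕ} : 0 < a → 0 < b → b ∣ a → EuclidChain R a b 1
  | step {a b c p n : ℕ} : 0 < c → c < b → 1 ≤ p → (a = b * p + c ∨ a + c = b * p) → R b c →
      EuclidChain R b c n → EuclidChain R a b (n + 1)

namespace EuclidChain

variable {R : ℕ → ℕ → Prop} {a b n : ℕ}

theorem add_left (h : EuclidChain R a b n) : EuclidChain R (a + b) b n := by
  cases h with
  | last ha hb hdvd => exact last (by omega) hb (dvd_add hdvd dvd_rfl)
  | @step _ _ c p _ hc hcb hp hdiv hR tail =>
    refine step hc hcb (p := p + 1) (by omega) ?_ hR tail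
    rw [mul_add_one]
    omega

theorem of_add_left (h : EuclidChain R (a + b) b n) (hba : b ≤ a) : EuclidChain R a b n := by
  cases h with
  | last _ hb hdvd => exact last (by omega) hb ((Nat.dvd_add_left dvd_rfl).mp hdvd)
  | @step _ _ c p _ hc hcb hp hdiv hR tail =>
    have hp2 : 2 ≤ p := by
      by_contra hp2
      obtain rfl : p = 1 := by omega
      omega
    refine step hc hcb (p := p - 1) (by omega) ?_ hR tail
    rw [Nat.mul_sub_one]
    have : b * 2 ≤ b * p := Nat.mul_le_mul_left b hp2
    omega

theorem exists_complement {c d : ℕ} (h : EuclidChain ⊤ (c + d) c n) (hd : 0 < d) (hdc : d ≤ c) :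
    ∃ n' ≤ n, EuclidChain ⊤ (c + d) d n' := by
  generalize hb : c + d = b at h
  induction h generalizing d with
  | @last _ c hb' hc hdvd =>
    subst hb
    obtain rfl : d = c :=
      le_antisymm hdc (Nat.le_of_dvd hd ((Nat.dvd_add_right dvd_rfl).mp hdvd))
    exact ⟨1, le_rfl, last hb' hc hdvd⟩
  | @step _ c e _ n' he hec _ hdiv _ tail ih =>
    subst hb
    have hmod := eq_mod_or_mod_add_eq hec hdiv
    rw [Nat.add_mod_left] at hmod
    have hdc' : d < c := by
      rcases hdc.eq_or_lt with rfl | hdc'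
      · simp only [Nat.mod_self] at hmod
        omega
      · exact hdc'
    rw [Nat.mod_eq_of_lt hdc'] at hmod
    rcases hmod with rfl | hde
    · exact ⟨n', by omega, tail.add_left⟩
    rcases le_or_gt d e with hde' | hed
    · obtain ⟨n'', hn'', tail'⟩ := ih hd hde' (by omega)
      exact ⟨n'', by omega, hde ▸ tail'.add_left⟩
    · -- restart with `c + d = 2 * d + e`
      refine ⟨n' + 1, le_rfl, step he hed (p := 2) (by omega) (by omega) trivial ?_⟩
      exact (hde ▸ tail).of_add_left hed.le

theorem length_le_of_lar {m : ℕ} (hL : EuclidChain (fun b c => 2 * c ≤ b) a b m)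
    (hE : EuclidChain ⊤ a b n) : m ≤ n := by
  induction hL generalizing n with
  | last => cases hE <;> omega
  | @step a b d _ _ hd hdb _ hdiv hlar _ ih =>
    cases hE with
    | last _ _ hdvd =>
      have := Nat.mod_eq_zero_of_dvd hdvd
      rcases eq_mod_or_mod_add_eq hdb hdiv with h | h <;> omega
    | @step _ _ c _ _ hc hcb _ hdiv' _ tail =>
      have hcd : c = d ∨ c + d = b := by
        rcases eq_mod_or_mod_add_eq hdb hdiv with h | h <;>
          rcases eq_mod_or_mod_add_eq hcb hdiv' with h' | h' <;> omega
      rcases hcd with rfl | hcd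
      · exact Nat.succ_le_succ (ih tail)
      · obtain ⟨n', hn', tail'⟩ := exists_complement (by rwa [hcd]) hd (by omega)
        have := ih (hcd ▸ tail')
        omega

end EuclidChain

namespace GenEuclid

variable {a b : ℕ}

theorem division (E : GenEuclid a b) {i : ℕ} (h1 : 1 ≤ i) (h2 : i < E.m) :
    E.x (i - 1) = E.x i * E.p i + E.x (i + 1) ∨ E.x (i - 1) + E.x (i + 1) = E.x i * E.p i := by
  have heq := E.heq i h1 h2.le
  rcases E.hε (i + 1) (by omega) h2 with hε | hε <;> rw [hε] at heq
  · exact .inl (by linarith)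
  · exact .inr (by linarith)

theorem euclidChain {R : ℕ → ℕ → Prop} (E : GenEuclid a b)
    (hR : ∀ i, 1 ≤ i → i < E.m → R (E.x i) (E.x (i + 1))) : EuclidChain R a b E.m := by
  have key : ∀ k i, 1 ≤ i → i + k = E.m → EuclidChain R (E.x (i - 1)) (E.x i) (k + 1) := by
    intro k
    induction k with
    | zero =>
      intro i hi him
      subst him
      have heq := E.heq _ hi le_rfl
      rw [E.hxm1] at heq
      refine .last (E.hpos _ (by omega)) (E.hpos _ le_rfl) ⟨E.p E.m, ?_⟩
      simp only [add_zero, Nat.cast_zero, mul_zero] at heq ⊢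
      exact_mod_cast heq
    | succ k ih =>
      intro i hi him
      have tail := ih (i + 1) (by omega) (by omega)
      rw [Nat.add_sub_cancel] at tail
      exact .step (E.hpos _ (by omega)) (E.hdec i hi (by omega)) (E.hp i hi (by omega))
        (E.division hi (by omega)) (hR i hi (by omega)) tail
  have := key (E.m - 1) 1 le_rfl (by have := E.hm; omega)
  rwa [Nat.sub_self, Nat.sub_add_cancel E.hm, E.hx0, E.hx1] at this

end GenEuclid

theorem kronecker_general (a b : ℕ) (L E : GenEuclid a b) (hL : L.IsLAR') :
    L.m ≤ E.m :=
  (L.euclidChain fun i h1 h2 => hL i h1 h2.le).length_le_of_lar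
    (E.euclidChain fun _ _ _ => trivial)

/-- Kronecker's theorem: for positive integers `a > b`, the number of divisions of the
method of least absolute remainders on `(a, b)` is at most the number of divisions of
any generalized Euclidean algorithm on `(a, b)`. -/
theorem kronecker (a b : ℕ) (hb : 0 < b) (hba : b < a)
    (L E : GenEuclid a b) (hL : L.IsLAR') :
    L.m ≤ E.m :=
  kronecker_general a b L E hL
end

section
/- Let a > b be positive integers, let n be the number of divisions of the regular Euclidean algorithm on (a,b), and let m be the number of divisions of the method of least absolute remainders on (a,b) with signs ε₂,…,ε_m ∈ {−1,+1}. Then n − m equals the number of indices i with ε_i = −1, i.e. n − m = (1/2) Σ_{i=2}^{m} (|ε_i| − ε_i). -/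
/-!
Write `s` for the regular remainder of `a` by `b`. When `2 s ≤ b` both algorithms take the step
`(a, b) → (b, s)`. Otherwise the least absolute remainder is `r = b - s` with sign `-1`, and since
`b = s + r` with `r < s`, the regular algorithm reaches `(s, r)` after the two divisions
`(a, b) → (b, s) → (s, r)`, while `(b, r)` and `(s, r)` continue alike because `b ≡ s [MOD r]`.
So every negative sign of the least absolute remainder method costs the regular algorithm exactly
one extra division.
-/

open Finset

def euclidLength (a b : ℕ) : ℕ :=
  if h : b = 0 then 0 else 1 + euclidLength b (a % b)
termination_by b
decreasing_by exact Nat.mod_lt _ (Nat.pos_of_ne_zero h)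

/-- The number of divisions plus the number of negative signs of the least absolute remainder
expansion of `(a, b)`. -/
def larWeightedLength (a b : ℕ) : ℕ :=
  if b = 0 then 0
  else if 2 * (a % b) ≤ b then 1 + larWeightedLength b (a % b)
  else 2 + larWeightedLength b (b - a % b)
termination_by b
decreasing_by
  all_goals first | exact Nat.mod_lt _ (by omega) | omega

@[simp]
theorem euclidLength_zero_right (a : ℕ) : euclidLength a 0 = 0 := by
  rw [euclidLength]; simp

theorem euclidLength_of_ne_zero {a b : ℕ} (hb : b ≠ 0) :
    euclidLength a b = 1 + euclidLength b (a % b) := by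
  rw [euclidLength]; simp [hb]

@[simp]
theorem larWeightedLength_zero_right (a : ℕ) : larWeightedLength a 0 = 0 := by
  rw [larWeightedLength]; simp

theorem larWeightedLength_of_two_mul_mod_le {a b : ℕ} (hb : b ≠ 0) (h : 2 * (a % b) ≤ b) :
    larWeightedLength a b = 1 + larWeightedLength b (a % b) := by
  rw [larWeightedLength]; simp [hb, h]

theorem larWeightedLength_of_lt_two_mul_mod {a b : ℕ} (hb : b ≠ 0) (h : b < 2 * (a % b)) :
    larWeightedLength a b = 2 + larWeightedLength b (b - a % b) := by
  rw [larWeightedLength]; simp [hb, not_le.mpr h]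

theorem larWeightedLength_add_right (a b : ℕ) :
    larWeightedLength (a + b) b = larWeightedLength a b := by
  conv_lhs => rw [larWeightedLength]
  conv_rhs => rw [larWeightedLength]
  rw [Nat.add_mod_right]

theorem euclidLength_eq_larWeightedLength (a b : ℕ) :
    euclidLength a b = larWeightedLength a b := by
  induction b using Nat.strong_induction_on generalizing a with
  | _ b ih =>
    rcases Nat.eq_zero_or_pos b with rfl | hb
    · simp
    set s := a % b with hs
    have hsb : s < b := Nat.mod_lt _ hb
    rw [euclidLength_of_ne_zero hb.ne']
    by_cases hhalf : 2 * s ≤ b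
    · rw [larWeightedLength_of_two_mul_mod_le hb.ne' hhalf, ih s hsb]
    · have hrs : b % s = b - s := by
        rw [Nat.mod_eq_sub_mod (by omega), Nat.mod_eq_of_lt (by omega)]
      have hcont : larWeightedLength b (b - s) = larWeightedLength s (b - s) := by
        rw [← larWeightedLength_add_right s (b - s), Nat.add_sub_cancel' hsb.le]
      rw [larWeightedLength_of_lt_two_mul_mod hb.ne' (by omega), ← hs,
        euclidLength_of_ne_zero (by omega), hrs, ih (b - s) (by omega), hcont]
      omega

theorem Nat.mod_eq_sub_of_add_eq_mul {a b q r : ℕ} (h : a + r = b * q) (hr : 0 < r)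
    (hrb : r ≤ b) : a % b = b - r := by
  obtain ⟨q, rfl⟩ := Nat.exists_eq_add_one_of_ne_zero (by rintro rfl; omega : q ≠ 0)
  have ha : a = b * q + (b - r) := by rw [Nat.mul_add_one] at h; omega
  rw [ha, Nat.mul_add_mod, Nat.mod_eq_of_lt (by omega)]

namespace GenEuclid

variable {a b : ℕ} (E : GenEuclid a b)

theorem mod_eq_of_sign_pos {i : ℕ} (hi : i < E.m) (hε : E.ε (i + 2) = 1 ∨ i + 1 = E.m) :
    E.x i % E.x (i + 1) = E.x (i + 2) := by
  have heq : (E.x i : ℤ) = E.x (i + 1) * E.p (i + 1) + E.ε (i + 2) * E.x (i + 2) :=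
    E.heq (i + 1) (by omega) (by omega)
  have hx : E.x i = E.x (i + 1) * E.p (i + 1) + E.x (i + 2) := by
    rcases hε with hε | hm
    · rw [hε] at heq; omega
    · rw [show i + 2 = E.m + 1 by omega, E.hxm1] at heq ⊢; omega
  rw [hx, Nat.mul_add_mod, Nat.mod_eq_of_lt (E.hdec (i + 1) (by omega) (by omega))]

theorem mod_eq_sub_of_sign_neg {i : ℕ} (hi : i + 1 < E.m) (hε : E.ε (i + 2) = -1) :
    E.x i % E.x (i + 1) = E.x (i + 1) - E.x (i + 2) := by
  have heq : (E.x i : ℤ) = E.x (i + 1) * E.p (i + 1) + E.ε (i + 2) * E.x (i + 2) :=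
    E.heq (i + 1) (by omega) (by omega)
  rw [hε] at heq
  exact Nat.mod_eq_sub_of_add_eq_mul (q := E.p (i + 1)) (by omega)
    (E.hpos (i + 2) (by omega)) (E.hdec (i + 1) (by omega) (by omega)).le

theorem euclidLength_eq (hR : E.IsRegular) {i : ℕ} (hi : i ≤ E.m) :
    euclidLength (E.x i) (E.x (i + 1)) = E.m - i := by
  induction hi using Nat.decreasingInduction with
  | self => simp [E.hxm1]
  | of_succ k hk ih =>
    have hε : E.ε (k + 2) = 1 ∨ k + 1 = E.m := by
      rcases Nat.lt_or_ge (k + 1) E.m with h | h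
      · exact .inl (hR (k + 2) (by omega) (by omega))
      · exact .inr (by omega)
    rw [euclidLength_of_ne_zero (E.hpos (k + 1) hk).ne', E.mod_eq_of_sign_pos hk hε, ih]
    omega

theorem larWeightedLength_eq (hL : E.IsLAR) {i : ℕ} (hi : i ≤ E.m) :
    larWeightedLength (E.x i) (E.x (i + 1)) = E.m - i + #{j ∈ Icc (i + 2) E.m | E.ε j = -1} := by
  induction hi using Nat.decreasingInduction with
  | self => simp [E.hxm1]
  | of_succ k hk ih =>
    have hx : E.x (k + 1) ≠ 0 := (E.hpos (k + 1) hk).ne'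
    obtain ⟨hhalf, htie⟩ := hL (k + 1) (by omega) hk
    simp only [add_assoc, Nat.reduceAdd] at ih hhalf htie
    rcases Nat.lt_or_ge (k + 1) E.m with hlt | hge
    · rw [← insert_Icc_add_one_left_eq_Icc (by omega : k + 2 ≤ E.m), filter_insert]
      simp only [add_assoc, Nat.reduceAdd]
      rcases E.hε (k + 2) (by omega) (by omega) with hε | hε
      · have hmod := E.mod_eq_of_sign_pos hk (.inl hε)
        rw [if_neg (by rw [hε]; decide), larWeightedLength_of_two_mul_mod_le hx (by rwa [hmod]),
          hmod, ih]
        omega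
      · have hstrict : 2 * E.x (k + 2) < E.x (k + 1) :=
          lt_of_le_of_ne hhalf fun h => by simp [htie h] at hε
        have hmod := E.mod_eq_sub_of_sign_neg hlt hε
        rw [if_pos hε, card_insert_of_notMem (by simp),
          larWeightedLength_of_lt_two_mul_mod hx (by omega), hmod, Nat.sub_sub_self (by omega), ih]
        omega
    · have hmod := E.mod_eq_of_sign_pos hk (.inr (by omega))
      rw [larWeightedLength_of_two_mul_mod_le hx (by rwa [hmod]), hmod, ih,
        Icc_eq_empty (by omega), Icc_eq_empty (by omega), filter_empty, card_empty]
      omega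

end GenEuclid

theorem sum_abs_sub_self_eq_two_mul_card {ι : Type*} (s : Finset ι) (ε : ι → ℤ)
    (hε : ∀ i ∈ s, ε i = 1 ∨ ε i = -1) :
    ∑ i ∈ s, (|ε i| - ε i) = 2 * #{i ∈ s | ε i = -1} := by
  rw [card_filter, Nat.cast_sum, mul_sum]
  refine sum_congr rfl fun i hi => ?_
  rcases hε i hi with h | h <;> simp [h]

theorem goodman_zaring_general (a b : ℕ)
    (R L : GenEuclid a b) (hR : R.IsRegular) (hL : L.IsLAR) :
    (R.m : ℤ) - (L.m : ℤ)
        = ((Finset.Icc 2 L.m).filter (fun i => L.ε i = -1)).card ∧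
    2 * ((R.m : ℤ) - (L.m : ℤ)) = ∑ i ∈ Finset.Icc 2 L.m, (|L.ε i| - L.ε i) := by
  have hR' := R.euclidLength_eq hR (Nat.zero_le _)
  have hL' := L.larWeightedLength_eq hL (Nat.zero_le _)
  rw [R.hx0, R.hx1] at hR'
  rw [L.hx0, L.hx1, ← euclidLength_eq_larWeightedLength, hR'] at hL'
  simp only [Nat.sub_zero, zero_add] at hL'
  have hcount : (R.m : ℤ) - L.m = #{i ∈ Icc 2 L.m | L.ε i = -1} := by
    rw [hL']; push_cast; ring
  refine ⟨hcount, ?_⟩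
  rw [hcount, sum_abs_sub_self_eq_two_mul_card]
  exact fun i hi => L.hε i (mem_Icc.mp hi).1 (mem_Icc.mp hi).2

/-- Goodman–Zaring (1952): for positive integers `a > b`, if the regular Euclidean
algorithm on `(a, b)` has `n` divisions and the method of least absolute remainders
has `m` divisions with signs `ε`, then `n - m` equals the number of negative signs,
i.e. `n - m = (1/2) * ∑ i in [2, m], (|ε i| - ε i)`. -/
theorem goodman_zaring (a b : ℕ) (hb : 0 < b) (hba : b < a)
    (R L : GenEuclid a b) (hR : R.IsRegular) (hL : L.IsLAR) :
    (R.m : ℤ) - (L.m : ℤ)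
        = ((Finset.Icc 2 L.m).filter (fun i => L.ε i = -1)).card ∧
    2 * ((R.m : ℤ) - (L.m : ℤ)) = ∑ i ∈ Finset.Icc 2 L.m, (|L.ε i| - L.ε i) :=
  goodman_zaring_general a b R L hR hL
end

section
/- For every rational number q ≥ 1 there exists a finite sequence of moves, each move being either x ↦ x − 1 or x ↦ −1/x (the latter applied only when x ≠ 0), transforming q into 0. In other words, every rational tangle with tangle number at least 1 can be untangled using twists in only one direction together with rotations. -/
/-- A restricted untangling move on a tangle number: a negative twist `x ↦ x - 1`
or a rotation `x ↦ -1/x` (only when `x ≠ 0`). -/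
inductive RestrictedMove : ℚ → ℚ → Prop
  | sub (x : ℚ) : RestrictedMove x (x - 1)
  | rot (x : ℚ) (h : x ≠ 0) : RestrictedMove x (-x⁻¹)

/-!
Write a non-integral `q = a / b ≥ 0` as `a = b ⌈q⌉ - r` with `0 < r < b`. Subtracting `1` a total
of `⌈q⌉` times and rotating sends `q` to `b / r = (⌈q⌉ - q)⁻¹`, again positive but with smaller
denominator. Iterating, we reach a nonnegative integer, which is untwisted to `0`.
-/

open Relation

namespace RestrictedMove

lemma reflTransGen_sub_natCast (q : ℚ) (n : ℕ) : ReflTransGen RestrictedMove q (q - n) := by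
  induction n with
  | zero => simpa using ReflTransGen.refl
  | succ k ih =>
    refine ih.tail ?_
    rw [Nat.cast_succ, ← sub_sub]
    exact sub _

lemma reflTransGen_sub_intCast (q : ℚ) {n : ℤ} (hn : 0 ≤ n) :
    ReflTransGen RestrictedMove q (q - n) := by
  lift n to ℕ using hn
  exact_mod_cast reflTransGen_sub_natCast q n

lemma reflTransGen_inv_ceil_sub_self {q : ℚ} (hq : 0 ≤ q) (hqz : q ≠ ⌈q⌉) :
    ReflTransGen RestrictedMove q (⌈q⌉ - q)⁻¹ := by
  have hrot : RestrictedMove (q - ⌈q⌉) (⌈q⌉ - q)⁻¹ := by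
    simpa [← inv_neg] using rot _ (sub_ne_zero.mpr hqz)
  exact (reflTransGen_sub_intCast q (Int.ceil_nonneg hq)).tail hrot

end RestrictedMove

namespace Rat

lemma ceil_sub_self_pos_of_den_ne_one {q : ℚ} (hq : q.den ≠ 1) : 0 < ⌈q⌉ - q :=
  sub_pos.mpr <| (Int.le_ceil q).lt_of_ne (ne_of_apply_ne den (by simpa using hq))

lemma den_inv_ceil_sub_self_lt {q : ℚ} (hq : q.den ≠ 1) : (⌈q⌉ - q)⁻¹.den < q.den := by
  have hpos := ceil_sub_self_pos_of_den_ne_one hq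
  have hnum_pos : 0 < (⌈q⌉ - q).num := num_pos.mpr hpos
  have hnum_lt : (⌈q⌉ - q).num < (⌈q⌉ - q).den :=
    num_lt_denom_iff.mpr (by linarith [Int.ceil_lt_add_one q])
  rw [den_inv_of_ne_zero hpos.ne', ← intCast_sub_den ⌈q⌉ q]
  omega

end Rat

theorem RestrictedMove.reflTransGen_zero_of_nonneg (q : ℚ) (hq : 0 ≤ q) :
    ReflTransGen RestrictedMove q 0 := by
  induction hd : q.den using Nat.strong_induction_on generalizing q with
  | _ d ih =>
    by_cases hden : q.den = 1
    · have hq_num : (q.num : ℚ) = q := Rat.coe_int_num_of_den_eq_one hden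
      simpa [hq_num] using reflTransGen_sub_intCast q (Rat.num_nonneg.mpr hq)
    · have hpos := Rat.ceil_sub_self_pos_of_den_ne_one hden
      refine (reflTransGen_inv_ceil_sub_self hq ?_).trans
        (ih _ (hd ▸ Rat.den_inv_ceil_sub_self_lt hden) _ (inv_pos.mpr hpos).le rfl)
      exact (sub_pos.mp hpos).ne

/-- Every rational number `q ≥ 1` can be transformed into `0` by a finite sequence of
moves `x ↦ x - 1` and `x ↦ -1/x`: every rational tangle with tangle number at least
`1` can be untangled using twists in only one direction together with rotations. -/
theorem restricted_untangle (q : ℚ) (hq : 1 ≤ q) :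
    Relation.ReflTransGen RestrictedMove q 0 :=
  RestrictedMove.reflTransGen_zero_of_nonneg q (zero_le_one.trans hq)
end
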